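/- Completeness of DCila with respect to swap Kripke models: for every set of formulas Γ ∪ {φ} ⊆ For(Σ), if Γ ⊨_DCila φ then Γ ⊢_DCila φ. -/

import Mathlib

/-- Formulas over the signature Σ = {∧, ∨, →, ¬, ∘, O}, with countably many
propositional variables. -/
inductive Form : Type
  | var : ℕ → Form
  | and : Form → Form → Form
  | or : Form → Form → Form
  | imp : Form → Form → Form
  | neg : Form → Form
  | circ : Form → Form
  | obl : Form → Form

namespace Form
/-- ⊥_α := (α ∧ ¬α) ∧ ∘α -/
def bot (α : Form) : Form := (α.and α.neg).and α.circ
end Form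

/-- Theorems of DCila: the DmbC axioms (CPL⁺, (EM), (bc), (O-K), (O-E)) plus
(ci), (cl), (cf) and the propagation axioms (ca_#) for # ∈ {∧, ∨, →},
with Modus Ponens and O-necessitation. -/
inductive ThmDCila : Form → Prop
  | A1 (α β : Form) : ThmDCila (α.imp (β.imp α))
  | A2 (α β γ : Form) : ThmDCila ((α.imp (β.imp γ)).imp ((α.imp β).imp (α.imp γ)))
  | A3 (α β : Form) : ThmDCila (α.imp (β.imp (α.and β)))
  | A4 (α β : Form) : ThmDCila ((α.and β).imp α)
  | A5 (α β : Form) : ThmDCila ((α.and β).imp β)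
  | A6 (α β : Form) : ThmDCila (α.imp (α.or β))
  | A7 (α β : Form) : ThmDCila (β.imp (α.or β))
  | A8 (α β γ : Form) : ThmDCila ((α.imp γ).imp ((β.imp γ).imp ((α.or β).imp γ)))
  | A9 (α β : Form) : ThmDCila (((α.imp β).imp α).imp α)
  | EM (α : Form) : ThmDCila (α.or α.neg)
  | bc (α β : Form) : ThmDCila (α.circ.imp (α.imp (α.neg.imp β)))
  | ci (α : Form) : ThmDCila (α.circ.neg.imp (α.and α.neg))
  | cl (α : Form) : ThmDCila ((α.and α.neg).neg.imp α.circ)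
  | cf (α : Form) : ThmDCila (α.neg.neg.imp α)
  | caAnd (α β : Form) : ThmDCila ((α.circ.and β.circ).imp (α.and β).circ)
  | caOr (α β : Form) : ThmDCila ((α.circ.and β.circ).imp (α.or β).circ)
  | caImp (α β : Form) : ThmDCila ((α.circ.and β.circ).imp (α.imp β).circ)
  | OK (α β : Form) : ThmDCila ((α.imp β).obl.imp (α.obl.imp β.obl))
  | OE (α : Form) : ThmDCila (α.bot.obl.imp α.bot)
  | mp {α β : Form} : ThmDCila (α.imp β) → ThmDCila α → ThmDCila β
  | nec {α : Form} : ThmDCila α → ThmDCila α.obl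

/-- conj γ [γ₂,…,γ_k] = γ ∧ γ₂ ∧ … ∧ γ_k -/
def conj (γ : Form) : List Form → Form
  | [] => γ
  | δ :: l => γ.and (conj δ l)

/-- Γ ⊢_DCila φ iff ⊢ φ or ⊢ (γ₁ ∧ … ∧ γ_k) → φ for some γ₁,…,γ_k ∈ Γ, k ≥ 1. -/
def DerivDCila (Γ : Set Form) (φ : Form) : Prop :=
  ThmDCila φ ∨ ∃ (γ : Form) (l : List Form),
    (∀ δ ∈ γ :: l, δ ∈ Γ) ∧ ThmDCila ((conj γ l).imp φ)

/-- The three snapshots T = (1,0), t = (1,1), F = (0,1). -/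
inductive SV : Type
  | T | t | F
deriving DecidableEq

/-- First coordinate of a snapshot. -/
def SV.p1 : SV → Bool
  | .T => true | .t => true | .F => false

/-- Second coordinate of a snapshot. -/
def SV.p2 : SV → Bool
  | .T => false | .t => true | .F => true

/-- Designated values: D = {T, t}, i.e. first coordinate is 1. -/
def SV.desig (a : SV) : Prop := a.p1 = true

/-- The Boolean (classical) snapshots {T, F}. -/
def SV.boo (a : SV) : Prop := a = SV.T ∨ a = SV.F

/-- Swap Kripke model conditions for DCila on a serial frame (W,R):
the DCi conditions (with ¬ interpreted by ¬̃₁ and ∘ by ∘̃₂) plus the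
restrictions that v_w(α) = t implies v_w(α ∧ ¬α) = T, and that
v_w(α), v_w(β) ∈ {T,F} implies v_w(α # β) ∈ {T,F} for # ∈ {∧, ∨, →}. -/
structure IsModelDCila {W : Type} (R : W → W → Prop) (v : W → Form → SV) : Prop where
  serial : ∀ w, ∃ w', R w w'
  and_ : ∀ w α β, (v w (α.and β)).p1 = ((v w α).p1 && (v w β).p1)
  or_ : ∀ w α β, (v w (α.or β)).p1 = ((v w α).p1 || (v w β).p1)
  imp_ : ∀ w α β, (v w (α.imp β)).p1 = (!(v w α).p1 || (v w β).p1)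
  neg_ : ∀ w α, (v w α.neg).p1 = (v w α).p2 ∧ (v w α.neg).p2 ≤ (v w α).p1
  circ_ : ∀ w α, (v w α.circ).p1 = !((v w α).p1 && (v w α).p2) ∧
    (v w α.circ).p2 = ((v w α).p1 && (v w α).p2)
  obl_ : ∀ w α, ((v w α.obl).p1 = true ↔ ∀ w', R w w' → (v w' α).p1 = true)
  cl_ : ∀ w α, v w α = SV.t → v w (α.and α.neg) = SV.T
  booAnd : ∀ w α β, (v w α).boo → (v w β).boo → (v w (α.and β)).boo
  booOr : ∀ w α β, (v w α).boo → (v w β).boo → (v w (α.or β)).boo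
  booImp : ∀ w α β, (v w α).boo → (v w β).boo → (v w (α.imp β)).boo

/-- Γ ⊨_DCila φ : semantic consequence over all swap Kripke models for DCila. -/
def SemDCila (Γ : Set Form) (φ : Form) : Prop :=
  ∀ (W : Type) (R : W → W → Prop) (v : W → Form → SV), Nonempty W →
    IsModelDCila R v → ∀ w : W, (∀ γ ∈ Γ, (v w γ).desig) → (v w φ).desig


/-!
Canonical model. By Zorn's lemma and the compactness of derivations, every set of formulas not
deriving ψ extends to a set Δ maximal with that property. In such a Δ conjunction, disjunction and
implication behave classically (by (EM) and Peirce's law), `∘α ∈ Δ` iff not both `α, ¬α ∈ Δ`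
(by (bc) and (ci)), and `Oα ∈ Δ` iff α lies in every such set containing `{β | Oβ ∈ Δ}` (by (O-K)
and necessitation). Hence assigning to φ the snapshot `(φ ∈ Δ, ¬φ ∈ Δ)` gives a swap Kripke model
for DCila, and it refutes every consequence that is not derivable.
-/

theorem ThmDCila.imp_self (φ : Form) : ThmDCila (φ.imp φ) :=
  .mp (.mp (.A2 φ (φ.imp φ) φ) (.A1 φ (φ.imp φ))) (.A1 φ φ)

namespace DCila

inductive Derives (Γ : Set Form) : Form → Prop
  | premise {φ : Form} : φ ∈ Γ → Derives Γ φ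
  | thm {φ : Form} : ThmDCila φ → Derives Γ φ
  | mp {φ χ : Form} : Derives Γ (φ.imp χ) → Derives Γ φ → Derives Γ χ

namespace Derives

variable {Γ Γ' : Set Form} {φ χ : Form}

theorem cut (h : Derives Γ φ) (hΓ : ∀ γ ∈ Γ, Derives Γ' γ) : Derives Γ' φ := by
  induction h with
  | premise hφ => exact hΓ _ hφ
  | thm t => exact .thm t
  | mp _ _ ih₁ ih₂ => exact .mp ih₁ ih₂

theorem mono (hΓ : Γ ⊆ Γ') (h : Derives Γ φ) : Derives Γ' φ :=
  h.cut fun _ hγ => .premise (hΓ hγ)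

theorem thmDCila (h : Derives ∅ φ) : ThmDCila φ := by
  induction h with
  | premise hφ => exact absurd hφ (Set.notMem_empty _)
  | thm t => exact t
  | mp _ _ ih₁ ih₂ => exact .mp ih₁ ih₂

theorem deduction (h : Derives (insert φ Γ) χ) : Derives Γ (φ.imp χ) := by
  induction h with
  | premise hχ =>
    rcases Set.mem_insert_iff.mp hχ with rfl | hχ
    · exact .thm (.imp_self _)
    · exact .mp (.thm (.A1 _ _)) (.premise hχ)
  | thm t => exact .mp (.thm (.A1 _ _)) (.thm t)
  | mp _ _ ih₁ ih₂ => exact .mp (.mp (.thm (.A2 _ _ _)) ih₁) ih₂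

theorem exists_list (h : Derives Γ φ) :
    ∃ L : List Form, {δ | δ ∈ L} ⊆ Γ ∧ Derives {δ | δ ∈ L} φ := by
  induction h with
  | @premise φ hφ => exact ⟨[φ], by simpa using hφ, .premise (by simp)⟩
  | thm t => exact ⟨[], by simp, .thm t⟩
  | mp _ _ ih₁ ih₂ =>
    obtain ⟨L₁, hL₁, d₁⟩ := ih₁
    obtain ⟨L₂, hL₂, d₂⟩ := ih₂
    refine ⟨L₁ ++ L₂, ?_, .mp (d₁.mono ?_) (d₂.mono ?_)⟩ <;>
      intro δ <;> simp only [Set.mem_ofPred_eq, List.mem_append] <;> grind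

theorem obl {Δ : Set Form} (h : Derives Γ φ) (hΓ : ∀ γ ∈ Γ, Derives Δ γ.obl) :
    Derives Δ φ.obl := by
  induction h with
  | premise hφ => exact hΓ _ hφ
  | thm t => exact .thm t.nec
  | mp _ _ ih₁ ih₂ => exact .mp (.mp (.thm (.OK _ _)) ih₁) ih₂

theorem of_mem_conj {γ δ : Form} {l : List Form} (h : δ ∈ γ :: l) :
    Derives {conj γ l} δ := by
  induction l generalizing γ with
  | nil => exact .premise (List.mem_singleton.mp h)
  | cons γ' l ih =>
    rcases List.mem_cons.mp h with rfl | h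
    · exact .mp (.thm (.A4 _ _)) (.premise rfl)
    · exact (ih h).cut fun _ hx => hx ▸ .mp (.thm (.A5 _ _)) (.premise rfl)

theorem derivDCila (h : Derives Γ φ) : DerivDCila Γ φ := by
  obtain ⟨L, hLΓ, hL⟩ := h.exists_list
  cases L with
  | nil => exact .inl (hL.mono (by simp)).thmDCila
  | cons γ l =>
    have hconj : Derives {conj γ l} φ := hL.cut fun _ hδ => of_mem_conj hδ
    refine .inr ⟨γ, l, fun δ hδ => hLΓ hδ, ?_⟩
    exact (deduction (hconj.mono (by simp))).thmDCila

end Derives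

structure Saturated (ψ : Form) (Δ : Set Form) : Prop where
  not_derives : ¬ Derives Δ ψ
  derives_insert_of_notMem : ∀ β ∉ Δ, Derives (insert β Δ) ψ

theorem exists_saturated_superset {Γ : Set Form} {ψ : Form} (h : ¬ Derives Γ ψ) :
    ∃ Δ, Γ ⊆ Δ ∧ Saturated ψ Δ := by
  have hchain : ∀ c ⊆ {Δ | ¬ Derives Δ ψ}, IsChain (· ⊆ ·) c → c.Nonempty →
      ∃ ub ∈ {Δ | ¬ Derives Δ ψ}, ∀ Δ ∈ c, Δ ⊆ ub := by
    refine fun c hc hchain hne => ⟨⋃₀ c, fun hψ => ?_, fun Δ hΔ => Set.subset_sUnion_of_mem hΔ⟩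
    obtain ⟨L, hLc, hL⟩ := hψ.exists_list
    obtain ⟨Δ, hΔc, hLΔ⟩ :=
      hchain.directedOn.exists_mem_subset_of_finite_of_subset_sUnion hne L.finite_toSet hLc
    exact hc hΔc (hL.mono hLΔ)
  obtain ⟨Δ, hΓΔ, hΔ⟩ := zorn_subset_nonempty _ hchain Γ h
  exact ⟨Δ, hΓΔ, hΔ.prop, fun β hβ => not_not.mp fun hψ => hβ (hΔ.mem_of_prop_insert hψ)⟩

namespace Saturated

variable {ψ : Form} {Δ : Set Form} (hΔ : Saturated ψ Δ) {α β : Form}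
include hΔ

theorem mem_of_derives (h : Derives Δ α) : α ∈ Δ := by
  by_contra hα
  exact hΔ.not_derives ((hΔ.derives_insert_of_notMem α hα).cut fun γ hγ =>
    (Set.mem_insert_iff.mp hγ).elim (· ▸ h) .premise)

theorem mem_of_thm_imp (t : ThmDCila (α.imp β)) (hα : α ∈ Δ) : β ∈ Δ :=
  hΔ.mem_of_derives (.mp (.thm t) (.premise hα))

theorem notMem : ψ ∉ Δ := fun h => hΔ.not_derives (.premise h)

theorem and_mem_iff : α.and β ∈ Δ ↔ α ∈ Δ ∧ β ∈ Δ :=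
  ⟨fun h => ⟨hΔ.mem_of_thm_imp (.A4 α β) h, hΔ.mem_of_thm_imp (.A5 α β) h⟩,
    fun ⟨hα, hβ⟩ => hΔ.mem_of_derives (.mp (.mp (.thm (.A3 α β)) (.premise hα)) (.premise hβ))⟩

theorem or_mem_iff : α.or β ∈ Δ ↔ α ∈ Δ ∨ β ∈ Δ := by
  refine ⟨fun h => ?_, fun h => h.elim (hΔ.mem_of_thm_imp (.A6 α β)) (hΔ.mem_of_thm_imp (.A7 α β))⟩
  by_contra! hαβ
  have hαψ := (hΔ.derives_insert_of_notMem α hαβ.1).deduction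
  have hβψ := (hΔ.derives_insert_of_notMem β hαβ.2).deduction
  exact hΔ.not_derives (.mp (.mp (.mp (.thm (.A8 α β ψ)) hαψ) hβψ) (.premise h))

/-- Peirce's law `((ψ → β) → ψ) → ψ` turns `α → ψ` and `(α → β) → ψ` into `ψ`. -/
theorem imp_mem_iff : α.imp β ∈ Δ ↔ (α ∈ Δ → β ∈ Δ) := by
  refine ⟨fun h hα => hΔ.mem_of_derives (.mp (.premise h) (.premise hα)), fun h => ?_⟩
  by_cases hα : α ∈ Δ
  · exact hΔ.mem_of_thm_imp (.A1 β α) (h hα)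
  by_contra hαβ
  have hαψ := (hΔ.derives_insert_of_notMem α hα).deduction
  have hαβψ := (hΔ.derives_insert_of_notMem _ hαβ).deduction
  have hψβ_αβ : Derives (insert (ψ.imp β) Δ) (α.imp β) :=
    .deduction (.mp (.premise (by simp))
      (.mp (hαψ.mono ((Set.subset_insert _ _).trans (Set.subset_insert _ _))) (.premise (by simp))))
  exact hΔ.not_derives
    (.mp (.thm (.A9 ψ β)) (.deduction (.mp (hαβψ.mono (Set.subset_insert _ _)) hψβ_αβ)))

theorem mem_or_neg_mem (α : Form) : α ∈ Δ ∨ α.neg ∈ Δ :=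
  hΔ.or_mem_iff.mp (hΔ.mem_of_derives (.thm (.EM α)))

theorem circ_mem_iff : α.circ ∈ Δ ↔ ¬(α ∈ Δ ∧ α.neg ∈ Δ) := by
  refine ⟨fun h ⟨hα, hnα⟩ => hΔ.not_derives ?_, fun h => ?_⟩
  · exact .mp (.mp (.mp (.thm (.bc α ψ)) (.premise h)) (.premise hα)) (.premise hnα)
  · exact (hΔ.mem_or_neg_mem α.circ).resolve_right
      fun hnc => h (hΔ.and_mem_iff.mp (hΔ.mem_of_thm_imp (.ci α) hnc))

theorem neg_circ_mem_iff : α.circ.neg ∈ Δ ↔ α ∈ Δ ∧ α.neg ∈ Δ :=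
  ⟨fun h => hΔ.and_mem_iff.mp (hΔ.mem_of_thm_imp (.ci α) h),
    fun h => (hΔ.mem_or_neg_mem α.circ).resolve_left fun hc => hΔ.circ_mem_iff.mp hc h⟩

theorem mem_of_neg_neg_mem (h : α.neg.neg ∈ Δ) : α ∈ Δ :=
  hΔ.mem_of_thm_imp (.cf α) h

theorem neg_and_neg_notMem (h : α ∈ Δ ∧ α.neg ∈ Δ) : (α.and α.neg).neg ∉ Δ :=
  fun hn => hΔ.circ_mem_iff.mp (hΔ.mem_of_thm_imp (.cl α) hn) h

end Saturated

def CanonicalWorld : Type := {Δ : Set Form // ∃ ψ, Saturated ψ Δ}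

def CanonicalRel (w w' : CanonicalWorld) : Prop := ∀ α : Form, α.obl ∈ w.1 → α ∈ w'.1

section canonicalModel

open Classical

noncomputable def canonicalVal (w : CanonicalWorld) (φ : Form) : SV :=
  if φ ∈ w.1 then (if φ.neg ∈ w.1 then .t else .T) else .F

namespace CanonicalWorld

variable (w : CanonicalWorld) {α : Form}

theorem saturated : Saturated w.2.choose w.1 := w.2.choose_spec

theorem obl_mem_iff : α.obl ∈ w.1 ↔ ∀ w', CanonicalRel w w' → α ∈ w'.1 := by
  refine ⟨fun h w' hw' => hw' α h, fun h => ?_⟩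
  by_contra hα
  have hnd : ¬ Derives {β | β.obl ∈ w.1} α :=
    fun hd => hα (w.saturated.mem_of_derives (hd.obl fun _ hγ => .premise hγ))
  obtain ⟨Δ, hwΔ, hΔ⟩ := exists_saturated_superset hnd
  exact hΔ.notMem (h ⟨Δ, α, hΔ⟩ fun β hβ => hwΔ hβ)

/-- If `w` had no successor, `O⊥` would hold vacuously at `w`, and (O-E) would put `⊥` in `w`. -/
theorem exists_canonicalRel : ∃ w', CanonicalRel w w' := by
  by_contra! hnone
  have hbot := w.saturated.mem_of_thm_imp (.OE (.var 0))
    (w.obl_mem_iff.mpr fun w' hw' => absurd hw' (hnone w'))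
  obtain ⟨hcontra, hcirc⟩ := w.saturated.and_mem_iff.mp hbot
  exact w.saturated.circ_mem_iff.mp hcirc (w.saturated.and_mem_iff.mp hcontra)

end CanonicalWorld

variable (w : CanonicalWorld) (φ : Form)

theorem canonicalVal_p1 : (canonicalVal w φ).p1 = decide (φ ∈ w.1) := by
  unfold canonicalVal; split_ifs <;> simp_all [SV.p1]

theorem canonicalVal_p2 : (canonicalVal w φ).p2 = decide (φ.neg ∈ w.1) := by
  have := w.saturated.mem_or_neg_mem φ
  unfold canonicalVal; split_ifs <;> simp_all [SV.p2]

theorem canonicalVal_eq_t_iff : canonicalVal w φ = .t ↔ φ ∈ w.1 ∧ φ.neg ∈ w.1 := by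
  unfold canonicalVal; split_ifs <;> simp_all

theorem canonicalVal_eq_T_iff : canonicalVal w φ = .T ↔ φ ∈ w.1 ∧ φ.neg ∉ w.1 := by
  unfold canonicalVal; split_ifs <;> simp_all

theorem canonicalVal_boo_iff : (canonicalVal w φ).boo ↔ φ.circ ∈ w.1 := by
  rw [w.saturated.circ_mem_iff]
  unfold canonicalVal SV.boo; split_ifs <;> simp_all

theorem canonicalVal_desig_iff : (canonicalVal w φ).desig ↔ φ ∈ w.1 := by
  simp [SV.desig, canonicalVal_p1]

theorem canonicalVal_boo_of_thm {α β χ : Form}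
    (hca : ThmDCila ((α.circ.and β.circ).imp χ.circ))
    (hα : (canonicalVal w α).boo) (hβ : (canonicalVal w β).boo) : (canonicalVal w χ).boo := by
  rw [canonicalVal_boo_iff] at *
  exact w.saturated.mem_of_thm_imp hca (w.saturated.and_mem_iff.mpr ⟨hα, hβ⟩)

theorem isModelDCila_canonical : IsModelDCila CanonicalRel canonicalVal where
  serial := CanonicalWorld.exists_canonicalRel
  and_ w α β := by simp [canonicalVal_p1, w.saturated.and_mem_iff]
  or_ w α β := by simp [canonicalVal_p1, w.saturated.or_mem_iff]
  imp_ w α β := by simp [canonicalVal_p1, w.saturated.imp_mem_iff]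
  neg_ w α := by
    refine ⟨by simp [canonicalVal_p1, canonicalVal_p2], ?_⟩
    simpa [canonicalVal_p1, canonicalVal_p2, Bool.le_iff_imp] using w.saturated.mem_of_neg_neg_mem
  circ_ w α := by
    simp [canonicalVal_p1, canonicalVal_p2, w.saturated.circ_mem_iff, w.saturated.neg_circ_mem_iff]
  obl_ w α := by simp [canonicalVal_p1, w.obl_mem_iff]
  cl_ w α h := by
    rw [canonicalVal_eq_t_iff] at h
    exact (canonicalVal_eq_T_iff _ _).mpr
      ⟨w.saturated.and_mem_iff.mpr h, w.saturated.neg_and_neg_notMem h⟩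
  booAnd w α β := canonicalVal_boo_of_thm w (.caAnd α β)
  booOr w α β := canonicalVal_boo_of_thm w (.caOr α β)
  booImp w α β := canonicalVal_boo_of_thm w (.caImp α β)

end canonicalModel

end DCila

/-- Completeness of DCila w.r.t. swap Kripke models. -/
theorem DCila_completeness (Γ : Set Form) (φ : Form) :
    SemDCila Γ φ → DerivDCila Γ φ := by
  intro hsem
  by_contra hnd
  obtain ⟨Δ, hΓΔ, hΔ⟩ := DCila.exists_saturated_superset fun h => hnd h.derivDCila
  let w : DCila.CanonicalWorld := ⟨Δ, φ, hΔ⟩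
  have hφ := hsem _ _ _ ⟨w⟩ DCila.isModelDCila_canonical w
    fun γ hγ => (DCila.canonicalVal_desig_iff w γ).mpr (hΓΔ hγ)
  exact hΔ.notMem ((DCila.canonicalVal_desig_iff w φ).mp hφ)
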